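/- arXiv:2411.07384 — 3 statements merged into one kernel-verified Lean document; each statement's English description precedes it below -/
import Mathlib

section
/- Let $1<p_1,p_2<\infty$ and define $1/p = 1/p_1 + 1/p_2$. Then for every $N\ge 1$, every $f\in\ell^{p_1}(\mathbb{Z})$, and every $g\in\ell^{p_2}(\mathbb{Z})$, the bilinear average $A_N(f,g)(x) = \frac{1}{N}\sum_{n=1}^N f(x-\lfloor\sqrt{n}\rfloor)g(x-n)$ satisfies $\|A_N(f,g)\|_{\ell^p(\mathbb{Z})} \le C_{p_1,p_2}\|f\|_{\ell^{p_1}(\mathbb{Z})}\|g\|_{\ell^{p_2}(\mathbb{Z})}$ with constant independent of $N$. -/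
/-!
For `p ≥ 1` the bound is a power-mean inequality over the `N` terms of the average followed by
Hölder's inequality for each product `f (x - ⌊√n⌋) g (x - n)`.

For `p < 1` the space `ℓ^p` is not normed, so we localize. On a window `[c, c + N)` the average only
sees `f` and `g` on `[c - N, c + N)`. By concavity, `∑ |A|^p ≤ N^(1-p) (∑ |A|)^p` over the window,
and the `ℓ¹` mass `∑ₓ ∑ₙ a(x - ⌊√n⌋) b(x - n)` is at most `2 ‖a‖₁ ‖b‖₁`, because `n ↦ n - ⌊√n⌋` is
injective both on squares and on non-squares. Hölder on the windows of length `2N` turns these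
`ℓ¹` norms into `ℓ^{p₁}` and `ℓ^{p₂}` norms, and a last Hölder inequality sums the local bounds over
all windows, each point lying in `N` windows `[c, c + N)` and `2N` windows `[c - N, c + N)`.
-/

open MeasureTheory Finset
open scoped ENNReal

namespace ENNReal

variable {ι : Type*}

theorem tsum_rpow_mul_rpow_le (u v : ι → ℝ≥0∞) {s t : ℝ} (hs : 0 ≤ s) (ht : 0 ≤ t)
    (hst : s + t = 1) : ∑' i, u i ^ s * v i ^ t ≤ (∑' i, u i) ^ s * (∑' i, v i) ^ t := by
  let _ : MeasurableSpace ι := ⊤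
  simpa only [lintegral_count] using lintegral_mul_norm_pow_le (μ := (Measure.count : Measure ι))
    measurable_from_top.aemeasurable measurable_from_top.aemeasurable hs ht hst

theorem sum_le_card_rpow_mul_sum_rpow (s : Finset ι) (f : ι → ℝ≥0∞) {q : ℝ} (hq : 1 ≤ q) :
    ∑ i ∈ s, f i ≤ (#s : ℝ≥0∞) ^ (1 - q⁻¹) * (∑ i ∈ s, f i ^ q) ^ q⁻¹ := by
  simpa using inner_le_weight_mul_Lp_of_nonneg s hq 1 f

theorem sum_rpow_le_card_rpow_mul_rpow_sum (s : Finset ι) (f : ι → ℝ≥0∞) {p : ℝ} (hp0 : 0 < p)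
    (hp1 : p ≤ 1) : ∑ i ∈ s, f i ^ p ≤ (#s : ℝ≥0∞) ^ (1 - p) * (∑ i ∈ s, f i) ^ p := by
  simpa only [← rpow_mul, mul_inv_cancel₀ hp0.ne', rpow_one, inv_inv] using
    sum_le_card_rpow_mul_sum_rpow s (fun i => f i ^ p) (one_le_inv₀ hp0 |>.mpr hp1)

theorem rpow_sum_le_card_rpow_mul_rpow_sum_rpow (s : Finset ι) (f : ι → ℝ≥0∞) {p q : ℝ}
    (hp : 0 ≤ p) (hq : 1 ≤ q) :
    (∑ i ∈ s, f i) ^ p ≤ (#s : ℝ≥0∞) ^ (p - p / q) * (∑ i ∈ s, f i ^ q) ^ (p / q) := by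
  calc (∑ i ∈ s, f i) ^ p ≤ ((#s : ℝ≥0∞) ^ (1 - q⁻¹) * (∑ i ∈ s, f i ^ q) ^ q⁻¹) ^ p :=
        rpow_le_rpow (sum_le_card_rpow_mul_sum_rpow s f hq) hp
    _ = _ := by
        rw [mul_rpow_of_nonneg _ _ hp, ← rpow_mul, ← rpow_mul]
        ring_nf

theorem tsum_sum_mul_comp_sub_le {G : Type*} [AddCommGroup G] (T : Finset ι) {s t : ι → G}
    (hst : Set.InjOn (fun i => t i - s i) T) (A B : G → ℝ≥0∞) :
    ∑' x, ∑ i ∈ T, A (x - s i) * B (x - t i) ≤ (∑' u, A u) * ∑' u, B u := by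
  classical
  have hshift (i : ι) : ∑' x, A (x - s i) * B (x - t i) = ∑' y, A (y + (t i - s i)) * B y := by
    rw [← (Equiv.addRight (t i)).tsum_eq]
    simp only [Equiv.coe_addRight, add_sub_cancel_right, add_sub]
  have hfiber (y : G) : ∑ i ∈ T, A (y + (t i - s i)) ≤ ∑' u, A u := by
    rw [← sum_image fun i hi j hj h => hst hi hj (add_left_cancel h)]
    exact ENNReal.sum_le_tsum _
  calc ∑' x, ∑ i ∈ T, A (x - s i) * B (x - t i)
      = ∑' y, (∑ i ∈ T, A (y + (t i - s i))) * B y := by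
        simp only [Summable.tsum_finsetSum (fun _ _ => ENNReal.summable), hshift, sum_mul]
    _ ≤ ∑' y, (∑' u, A u) * B y := ENNReal.tsum_le_tsum fun y => by gcongr; exact hfiber y
    _ = (∑' u, A u) * ∑' u, B u := ENNReal.tsum_mul_left

theorem tsum_rpow_mul_comp_sub_le {G : Type*} [AddCommGroup G] (a b : G → ℝ≥0∞) (s t : G)
    {p1 p2 p : ℝ} (h1 : 0 < p1) (h2 : 0 < p2) (hp0 : 0 < p) (hp : p / p1 + p / p2 = 1) :
    ∑' x, (a (x - s) * b (x - t)) ^ p ≤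
      (∑' u, a u ^ p1) ^ (p / p1) * (∑' u, b u ^ p2) ^ (p / p2) := by
  have hsplit (x : G) : (a (x - s) * b (x - t)) ^ p =
      (a (x - s) ^ p1) ^ (p / p1) * (b (x - t) ^ p2) ^ (p / p2) := by
    rw [mul_rpow_of_nonneg _ _ hp0.le, ← rpow_mul, ← rpow_mul,
      mul_div_cancel₀ _ h1.ne', mul_div_cancel₀ _ h2.ne']
  simp only [hsplit]
  refine (tsum_rpow_mul_rpow_le _ _ (by positivity) (by positivity) hp).trans_eq ?_
  congr 2
  · exact (Equiv.subRight s).tsum_eq fun u => a u ^ p1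
  · exact (Equiv.subRight t).tsum_eq fun u => b u ^ p2

theorem tsum_sum_Ico_add (h : ℤ → ℝ≥0∞) (i j : ℤ) :
    ∑' c, ∑ x ∈ Ico (i + c) (j + c), h x = (j - i).toNat * ∑' x, h x := by
  have hshift (x : ℤ) : ∑' c, h (c + x) = ∑' u, h u := (Equiv.addRight x).tsum_eq h
  simp_rw [← sum_Ico_add]
  rw [Summable.tsum_finsetSum (fun _ _ => ENNReal.summable)]
  simp only [hshift, sum_const, Int.card_Ico, nsmul_eq_mul]

end ENNReal

theorem Nat.injOn_sub_sqrt_of_sq :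
    Set.InjOn (fun n : ℕ => (n : ℤ) - Nat.sqrt n) {n | 0 < n ∧ Nat.sqrt n * Nat.sqrt n = n} := by
  rintro n ⟨hn, hsq⟩ n' ⟨hn', hsq'⟩ h
  have hm : 0 < Nat.sqrt n := Nat.sqrt_pos.mpr hn
  have hm' : 0 < Nat.sqrt n' := Nat.sqrt_pos.mpr hn'
  have e : (n : ℤ) = Nat.sqrt n * Nat.sqrt n := by exact_mod_cast hsq.symm
  have e' : (n' : ℤ) = Nat.sqrt n' * Nat.sqrt n' := by exact_mod_cast hsq'.symm
  have : ((Nat.sqrt n : ℤ) - Nat.sqrt n') * (Nat.sqrt n + Nat.sqrt n' - 1) = 0 := by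
    simp only at h; linear_combination h - e + e'
  rcases Int.mul_eq_zero.mp this with h | h
  · rw [← hsq, ← hsq', show Nat.sqrt n = Nat.sqrt n' by omega]
  · omega

theorem Nat.injOn_sub_sqrt_of_not_sq :
    Set.InjOn (fun n : ℕ => (n : ℤ) - Nat.sqrt n) {n | Nat.sqrt n * Nat.sqrt n ≠ n} := by
  suffices ∀ n n', n < n' → Nat.sqrt n' * Nat.sqrt n' ≠ n' →
      (n : ℤ) - Nat.sqrt n ≠ n' - Nat.sqrt n' by
    intro n hn n' hn' h
    rcases lt_trichotomy n n' with hlt | heq | hlt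
    · exact absurd h (this n n' hlt hn')
    · exact heq
    · exact absurd h.symm (this n' n hlt hn)
  intro n n' hlt hsq' h
  have h1 : Nat.sqrt n' * Nat.sqrt n' < n' := lt_of_le_of_ne (Nat.sqrt_le n') hsq'
  have h2 : n < (Nat.sqrt n + 1) * (Nat.sqrt n + 1) := Nat.lt_succ_sqrt n
  zify at h1 h2 hlt
  nlinarith

theorem pos_of_inv_eq_inv_add_inv {p1 p2 p : ℝ} (h1 : 0 < p1) (h2 : 0 < p2)
    (hp : p⁻¹ = p1⁻¹ + p2⁻¹) : 0 < p :=
  inv_pos.mp (hp ▸ by positivity)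

theorem div_add_div_eq_one_of_inv_eq_inv_add_inv {p1 p2 p : ℝ} (h1 : 0 < p1) (h2 : 0 < p2)
    (hp : p⁻¹ = p1⁻¹ + p2⁻¹) : p / p1 + p / p2 = 1 := by
  rw [div_eq_mul_inv, div_eq_mul_inv, ← mul_add, ← hp,
    mul_inv_cancel₀ (pos_of_inv_eq_inv_add_inv h1 h2 hp).ne']

/-- `N` times the bilinear average `A_N(a, b)(x)`. -/
noncomputable def sqrtBilinearSum (N : ℕ) (a b : ℤ → ℝ≥0∞) (x : ℤ) : ℝ≥0∞ :=
  ∑ n ∈ Icc 1 N, a (x - Nat.sqrt n) * b (x - n)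

theorem tsum_sqrtBilinearSum_le (N : ℕ) (a b : ℤ → ℝ≥0∞) :
    ∑' x, sqrtBilinearSum N a b x ≤ 2 * ((∑' u, a u) * ∑' u, b u) := by
  classical
  simp only [sqrtBilinearSum, ← sum_filter_add_sum_filter_not (Icc 1 N)
    (fun n => Nat.sqrt n * Nat.sqrt n = n), ENNReal.tsum_add, two_mul]
  gcongr <;> refine ENNReal.tsum_sum_mul_comp_sub_le _ ?_ a b
  · refine Nat.injOn_sub_sqrt_of_sq.mono fun n hn => ?_
    simp only [coe_filter, mem_Icc] at hn
    exact ⟨hn.1.1, hn.2⟩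
  · refine Nat.injOn_sub_sqrt_of_not_sq.mono fun n hn => ?_
    simp only [coe_filter, mem_Icc] at hn
    exact hn.2

theorem sum_rpow_sqrtBilinearSum_le {p1 p2 p : ℝ} (h1 : 1 ≤ p1) (h2 : 1 ≤ p2) (hp1 : p ≤ 1)
    (hp : p⁻¹ = p1⁻¹ + p2⁻¹) {N : ℕ} {I W : Finset ℤ} (hIW : #I ≤ #W)
    (hmem : ∀ x ∈ I, ∀ n ∈ Icc 1 N, x - Nat.sqrt n ∈ W ∧ x - n ∈ W) (a b : ℤ → ℝ≥0∞) :
    ∑ x ∈ I, sqrtBilinearSum N a b x ^ p ≤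
      (2 * #W) ^ p * (∑ u ∈ W, a u ^ p1) ^ (p / p1) * (∑ u ∈ W, b u ^ p2) ^ (p / p2) := by
  have hloc : ∀ x ∈ I, sqrtBilinearSum N a b x =
      sqrtBilinearSum N ((W : Set ℤ).indicator a) ((W : Set ℤ).indicator b) x := fun x hx =>
    sum_congr rfl fun n hn => by
      rw [Set.indicator_of_mem (hmem x hx n hn).1, Set.indicator_of_mem (hmem x hx n hn).2]
  have hsum : ∑ x ∈ I, sqrtBilinearSum N a b x ≤ 2 * ((∑ u ∈ W, a u) * ∑ u ∈ W, b u) := by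
    rw [sum_congr rfl hloc, sum_eq_tsum_indicator a W, sum_eq_tsum_indicator b W]
    exact (ENNReal.sum_le_tsum I).trans (tsum_sqrtBilinearSum_le N _ _)
  have hp0 := pos_of_inv_eq_inv_add_inv (by linarith) (by linarith) hp
  have hexp := div_add_div_eq_one_of_inv_eq_inv_add_inv (by linarith) (by linarith) hp
  have hp1' : 0 ≤ p - p / p1 := sub_nonneg.mpr (div_le_self hp0.le h1)
  have hp2' : 0 ≤ p - p / p2 := sub_nonneg.mpr (div_le_self hp0.le h2)
  calc ∑ x ∈ I, sqrtBilinearSum N a b x ^ p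
      ≤ (#I : ℝ≥0∞) ^ (1 - p) * (∑ x ∈ I, sqrtBilinearSum N a b x) ^ p :=
        ENNReal.sum_rpow_le_card_rpow_mul_rpow_sum I _ hp0 hp1
    _ ≤ (#W : ℝ≥0∞) ^ (1 - p) * (2 * ((∑ u ∈ W, a u) * ∑ u ∈ W, b u)) ^ p := by
        gcongr
    _ = 2 ^ p * (#W ^ (1 - p) * (∑ u ∈ W, a u) ^ p * (∑ u ∈ W, b u) ^ p) := by
        rw [ENNReal.mul_rpow_of_nonneg _ _ hp0.le, ENNReal.mul_rpow_of_nonneg _ _ hp0.le]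
        ring
    _ ≤ 2 ^ p * (#W ^ (1 - p) * (#W ^ (p - p / p1) * (∑ u ∈ W, a u ^ p1) ^ (p / p1)) *
          (#W ^ (p - p / p2) * (∑ u ∈ W, b u ^ p2) ^ (p / p2))) := by
        gcongr
        · exact ENNReal.rpow_sum_le_card_rpow_mul_rpow_sum_rpow W a hp0.le h1
        · exact ENNReal.rpow_sum_le_card_rpow_mul_rpow_sum_rpow W b hp0.le h2
    _ = (2 * #W) ^ p * (∑ u ∈ W, a u ^ p1) ^ (p / p1) * (∑ u ∈ W, b u ^ p2) ^ (p / p2) := by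
        have hW : (#W : ℝ≥0∞) ^ (1 - p) * #W ^ (p - p / p1) * #W ^ (p - p / p2) = #W ^ p := by
          rw [← ENNReal.rpow_add_of_nonneg _ _ (by linarith) hp1',
            ← ENNReal.rpow_add_of_nonneg _ _ (by linarith) hp2']
          congr 1
          linarith
        rw [ENNReal.mul_rpow_of_nonneg _ _ hp0.le, ← hW]
        ring

theorem tsum_rpow_sqrtBilinearSum_le_of_le_one {p1 p2 p : ℝ} (h1 : 1 ≤ p1) (h2 : 1 ≤ p2)
    (hp1 : p ≤ 1) (hp : p⁻¹ = p1⁻¹ + p2⁻¹) {N : ℕ} (hN : 0 < N) (a b : ℤ → ℝ≥0∞) :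
    ∑' x, sqrtBilinearSum N a b x ^ p ≤
      2 * (4 * N) ^ p * (∑' u, a u ^ p1) ^ (p / p1) * (∑' u, b u ^ p2) ^ (p / p2) := by
  have hp0 := pos_of_inv_eq_inv_add_inv (by linarith) (by linarith) hp
  have hexp := div_add_div_eq_one_of_inv_eq_inv_add_inv (by linarith) (by linarith) hp
  have hN0 : (N : ℝ≥0∞) ≠ 0 := by exact_mod_cast hN.ne'
  have hW (c : ℤ) : (2 * #(Ico (-N + c) (N + c)) : ℝ≥0∞) = 4 * N := by
    rw [Int.card_Ico, show (N + c - (-N + c)).toNat = 2 * N by omega]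
    push_cast; ring
  have hwindows (h : ℤ → ℝ≥0∞) :
      ∑' c : ℤ, ∑ u ∈ Ico (-N + c) (N + c), h u = 2 * N * ∑' u, h u := by
    rw [ENNReal.tsum_sum_Ico_add, show ((N : ℤ) - -(N : ℤ)).toNat = 2 * N by omega]
    push_cast; rfl
  refine (ENNReal.mul_le_mul_iff_right hN0 (ENNReal.natCast_ne_top N)).mp ?_
  calc (N : ℝ≥0∞) * ∑' x, sqrtBilinearSum N a b x ^ p
      = ∑' c : ℤ, ∑ x ∈ Ico (0 + c) (N + c), sqrtBilinearSum N a b x ^ p := by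
        rw [ENNReal.tsum_sum_Ico_add]; simp
    _ ≤ ∑' c : ℤ, (4 * N) ^ p * (∑ u ∈ Ico (-N + c) (N + c), a u ^ p1) ^ (p / p1) *
          (∑ u ∈ Ico (-N + c) (N + c), b u ^ p2) ^ (p / p2) := by
        refine ENNReal.tsum_le_tsum fun c => ?_
        rw [← hW c]
        refine sum_rpow_sqrtBilinearSum_le h1 h2 hp1 hp ?_ (fun x hx n hn => ?_) a b
        · simp only [Int.card_Ico]; omega
        · have := Nat.sqrt_le_self n
          simp only [mem_Ico, mem_Icc] at hx hn ⊢
          omega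
    _ ≤ (4 * N) ^ p * ((∑' c : ℤ, ∑ u ∈ Ico (-N + c) (N + c), a u ^ p1) ^ (p / p1) *
          (∑' c : ℤ, ∑ u ∈ Ico (-N + c) (N + c), b u ^ p2) ^ (p / p2)) := by
        simp only [mul_assoc, ENNReal.tsum_mul_left]
        gcongr
        exact ENNReal.tsum_rpow_mul_rpow_le _ _ (by positivity) (by positivity) hexp
    _ = N * (2 * (4 * N) ^ p * (∑' u, a u ^ p1) ^ (p / p1) * (∑' u, b u ^ p2) ^ (p / p2)) := by
        have h2N : (2 * N : ℝ≥0∞) ^ (p / p1) * (2 * N) ^ (p / p2) = 2 * N := by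
          rw [← ENNReal.rpow_add_of_nonneg _ _ (by positivity) (by positivity), hexp,
            ENNReal.rpow_one]
        rw [hwindows, hwindows, ENNReal.mul_rpow_of_nonneg (2 * N : ℝ≥0∞) _ (by positivity),
          ENNReal.mul_rpow_of_nonneg (2 * N : ℝ≥0∞) _ (by positivity)]
        calc _ = (4 * N : ℝ≥0∞) ^ p * ((2 * N) ^ (p / p1) * (2 * N) ^ (p / p2)) *
              (∑' u, a u ^ p1) ^ (p / p1) * (∑' u, b u ^ p2) ^ (p / p2) := by ring
          _ = _ := by rw [h2N]; ring

theorem tsum_rpow_sqrtBilinearSum_le_of_one_le {p1 p2 p : ℝ} (h1 : 0 < p1) (h2 : 0 < p2)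
    (hp1 : 1 ≤ p) (hp : p⁻¹ = p1⁻¹ + p2⁻¹) (N : ℕ) (a b : ℤ → ℝ≥0∞) :
    ∑' x, sqrtBilinearSum N a b x ^ p ≤
      (N : ℝ≥0∞) ^ p * (∑' u, a u ^ p1) ^ (p / p1) * (∑' u, b u ^ p2) ^ (p / p2) := by
  have hcard : (#(Icc 1 N) : ℝ≥0∞) = N := by simp
  have hNp : (N : ℝ≥0∞) ^ (p - 1) * N ^ (1 : ℝ) = N ^ p := by
    rw [← ENNReal.rpow_add_of_nonneg _ _ (by linarith) zero_le_one, sub_add_cancel]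
  calc ∑' x, sqrtBilinearSum N a b x ^ p
      ≤ ∑' x, (N : ℝ≥0∞) ^ (p - 1) * ∑ n ∈ Icc 1 N, (a (x - Nat.sqrt n) * b (x - n)) ^ p :=
        ENNReal.tsum_le_tsum fun x => hcard ▸ ENNReal.rpow_sum_le_const_mul_sum_rpow _ _ hp1
    _ = (N : ℝ≥0∞) ^ (p - 1) * ∑ n ∈ Icc 1 N, ∑' x, (a (x - Nat.sqrt n) * b (x - n)) ^ p := by
        rw [ENNReal.tsum_mul_left, Summable.tsum_finsetSum (fun _ _ => ENNReal.summable)]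
    _ ≤ (N : ℝ≥0∞) ^ (p - 1) * ∑ n ∈ Icc 1 N,
          (∑' u, a u ^ p1) ^ (p / p1) * (∑' u, b u ^ p2) ^ (p / p2) := by
        gcongr with n
        exact ENNReal.tsum_rpow_mul_comp_sub_le a b _ _ h1 h2 (by linarith)
          (div_add_div_eq_one_of_inv_eq_inv_add_inv h1 h2 hp)
    _ = _ := by
        rw [sum_const, nsmul_eq_mul, hcard, ← hNp, ENNReal.rpow_one]
        ring

theorem tsum_rpow_sqrtBilinearSum_le {p1 p2 p : ℝ} (h1 : 1 ≤ p1) (h2 : 1 ≤ p2)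
    (hp : p⁻¹ = p1⁻¹ + p2⁻¹) {N : ℕ} (hN : 0 < N) (a b : ℤ → ℝ≥0∞) :
    ∑' x, sqrtBilinearSum N a b x ^ p ≤
      2 * (4 * N) ^ p * (∑' u, a u ^ p1) ^ (p / p1) * (∑' u, b u ^ p2) ^ (p / p2) := by
  rcases le_total p 1 with hp1 | hp1
  · exact tsum_rpow_sqrtBilinearSum_le_of_le_one h1 h2 hp1 hp hN a b
  refine (tsum_rpow_sqrtBilinearSum_le_of_one_le (by linarith) (by linarith) hp1 hp N a b).trans ?_
  gcongr
  calc (N : ℝ≥0∞) ^ p ≤ (4 * N) ^ p := by gcongr; exact le_mul_of_one_le_left' (by norm_num)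
    _ ≤ 2 * (4 * N) ^ p := le_mul_of_one_le_left' one_le_two

theorem rpow_tsum_rpow_inv_mul_sqrtBilinearSum_le {p1 p2 p : ℝ} (h1 : 1 ≤ p1) (h2 : 1 ≤ p2)
    (hp : p⁻¹ = p1⁻¹ + p2⁻¹) {N : ℕ} (hN : 0 < N) (a b : ℤ → ℝ≥0∞) :
    (∑' x, ((N : ℝ≥0∞)⁻¹ * sqrtBilinearSum N a b x) ^ p) ^ (1 / p) ≤
      2 ^ (1 / p) * 4 * (∑' u, a u ^ p1) ^ (1 / p1) * (∑' u, b u ^ p2) ^ (1 / p2) := by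
  have hp0 := pos_of_inv_eq_inv_add_inv (by linarith) (by linarith) hp
  have hr : 0 ≤ 1 / p := by positivity
  calc (∑' x, ((N : ℝ≥0∞)⁻¹ * sqrtBilinearSum N a b x) ^ p) ^ (1 / p)
      = (N : ℝ≥0∞)⁻¹ * (∑' x, sqrtBilinearSum N a b x ^ p) ^ (1 / p) := by
        simp_rw [ENNReal.mul_rpow_of_nonneg _ _ hp0.le]
        rw [ENNReal.tsum_mul_left, ENNReal.mul_rpow_of_nonneg _ _ hr,
          ← ENNReal.rpow_mul, mul_one_div_cancel hp0.ne', ENNReal.rpow_one]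
    _ ≤ (N : ℝ≥0∞)⁻¹ * (2 * (4 * N) ^ p * (∑' u, a u ^ p1) ^ (p / p1) *
          (∑' u, b u ^ p2) ^ (p / p2)) ^ (1 / p) := by
        gcongr
        exact tsum_rpow_sqrtBilinearSum_le h1 h2 hp hN a b
    _ = ((N : ℝ≥0∞)⁻¹ * N) * (2 ^ (1 / p) * 4 * (∑' u, a u ^ p1) ^ (1 / p1) *
          (∑' u, b u ^ p2) ^ (1 / p2)) := by
        rw [ENNReal.mul_rpow_of_nonneg _ _ hr, ENNReal.mul_rpow_of_nonneg _ _ hr,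
          ENNReal.mul_rpow_of_nonneg _ _ hr, ← ENNReal.rpow_mul, ← ENNReal.rpow_mul,
          ← ENNReal.rpow_mul, mul_one_div_cancel hp0.ne', ENNReal.rpow_one,
          show p / p1 * (1 / p) = 1 / p1 by field_simp, show p / p2 * (1 / p) = 1 / p2 by field_simp]
        ring
    _ = _ := by
        rw [ENNReal.inv_mul_cancel (by exact_mod_cast hN.ne') (ENNReal.natCast_ne_top N), one_mul]

theorem eLpNorm_ofReal_count {α E : Type*} [MeasurableSpace α] [MeasurableSingletonClass α]
    [NormedAddCommGroup E] (f : α → E) {q : ℝ} (hq : 0 < q) :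
    eLpNorm f (ENNReal.ofReal q) Measure.count = (∑' x, ‖f x‖ₑ ^ q) ^ (1 / q) := by
  rw [eLpNorm_eq_lintegral_rpow_enorm_toReal (by simpa using hq) ENNReal.ofReal_ne_top,
    ENNReal.toReal_ofReal hq.le, lintegral_count]

theorem enorm_inv_mul_sum_le_sqrtBilinearSum {𝕜 : Type*} [RCLike 𝕜] {N : ℕ} (hN : 0 < N)
    (f g : ℤ → 𝕜) (x : ℤ) :
    ‖(N : 𝕜)⁻¹ * ∑ n ∈ Icc 1 N, f (x - Nat.sqrt n) * g (x - n)‖ₑ ≤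
      (N : ℝ≥0∞)⁻¹ * sqrtBilinearSum N (‖f ·‖ₑ) (‖g ·‖ₑ) x := by
  rw [enorm_mul, enorm_inv (by exact_mod_cast hN.ne'), ← ofReal_norm, sqrtBilinearSum]
  gcongr
  · simp
  · exact (enorm_sum_le _ _).trans_eq (by simp only [enorm_mul])

theorem stmt11 (p1 p2 p : ℝ) (h1 : 1 < p1) (h2 : 1 < p2)
    (hp : p⁻¹ = p1⁻¹ + p2⁻¹) :
    ∃ C : ℝ≥0∞, 0 < C ∧ C < ⊤ ∧ ∀ N : ℕ, 1 ≤ N → ∀ f g : ℤ → ℂ,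
      Memℓp f (ENNReal.ofReal p1) → Memℓp g (ENNReal.ofReal p2) →
      eLpNorm (fun x : ℤ => (N : ℂ)⁻¹ *
          ∑ n ∈ Finset.Icc 1 N, f (x - (Nat.sqrt n : ℤ)) * g (x - (n : ℤ)))
          (ENNReal.ofReal p) Measure.count ≤
        C * eLpNorm f (ENNReal.ofReal p1) Measure.count *
          eLpNorm g (ENNReal.ofReal p2) Measure.count := by
  have hp0 := pos_of_inv_eq_inv_add_inv (by linarith) (by linarith) hp
  refine ⟨2 ^ (1 / p) * 4, by positivity, by finiteness, fun N hN f g _ _ => ?_⟩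
  rw [eLpNorm_ofReal_count _ hp0, eLpNorm_ofReal_count _ (by linarith),
    eLpNorm_ofReal_count _ (by linarith)]
  calc (∑' x, ‖(N : ℂ)⁻¹ * ∑ n ∈ Icc 1 N, f (x - Nat.sqrt n) * g (x - n)‖ₑ ^ p) ^ (1 / p)
      ≤ (∑' x, ((N : ℝ≥0∞)⁻¹ * sqrtBilinearSum N (‖f ·‖ₑ) (‖g ·‖ₑ) x) ^ p) ^ (1 / p) := by
        gcongr with x
        exact enorm_inv_mul_sum_le_sqrtBilinearSum hN f g x
    _ ≤ _ := rpow_tsum_rpow_inv_mul_sqrtBilinearSum_le h1.le h2.le hp hN _ _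
end

section
/- Let $(X,\mu)$ be a non-atomic probability space, $T:X\to X$ an ergodic invertible measure preserving map, and $p_1,p_2>0$ with $1/p=1/p_1+1/p_2$. Suppose the maximal inequality $\|\sup_{N\in\mathbb{N}}|A_{N;X}(f,g)|\|_{L^p(X)} \le C\|f\|_{L^{p_1}(X)}\|g\|_{L^{p_2}(X)}$ holds for all $f\in L^{p_1}(X)$ and $g\in L^{p_2}(X)$, and suppose moreover that for every measurable set $A$ the averages $\frac{1}{N}\sum_{n=1}^N 1_A(T^{\lfloor\sqrt n\rfloor}x)1_A(T^n x)$ converge to $\mu(A)^2$ almost everywhere. Then $p\ge 1/2$. -/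
/-!
Test the maximal inequality on `f = g = 1_A`. The averages converge to `μ(A)²` almost everywhere,
so the maximal function is at least `μ(A)²` almost everywhere and, `μ` being a probability
measure, so is its `L^p` quasi-norm; the right-hand side is `C μ(A)^(1/p₁ + 1/p₂) = C μ(A)^(1/p)`.
Hence `μ(A)² ≤ C μ(A)^(1/p)` for every set `A`, and since non-atomicity provides sets of
arbitrarily small positive measure, `1/p ≤ 2`.
-/

open MeasureTheory Filter Topology
open scoped ENNReal

lemma le_of_frequently_rpow_le_mul_rpow {s t C : ℝ}
    (h : ∃ᶠ a in 𝓝[>] (0 : ℝ), a ^ t ≤ C * a ^ s) : s ≤ t := by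
  by_contra! hts
  have hst : 0 < s - t := sub_pos.mpr hts
  have hsmall : ∀ᶠ a in 𝓝[>] (0 : ℝ), C * a ^ (s - t) < 1 := by
    have : Tendsto (fun a : ℝ => C * a ^ (s - t)) (𝓝 0) (𝓝 0) := by
      simpa [Real.zero_rpow hst.ne'] using
        ((Real.continuousAt_rpow_const 0 _ (.inr hst.le)).const_mul C).tendsto
    exact nhdsWithin_le_nhds (this.eventually (gt_mem_nhds one_pos))
  obtain ⟨a, hle, hlt, ha⟩ := (h.and_eventually (hsmall.and self_mem_nhdsWithin)).exists
  have hsplit : C * a ^ s = C * a ^ (s - t) * a ^ t := by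
    rw [mul_assoc, ← Real.rpow_add ha, sub_add_cancel]
  nlinarith [Real.rpow_pos_of_pos ha t]

lemma ofReal_le_iSup_enorm_of_tendsto {u : ℕ → ℝ} {l : ℝ} (h : Tendsto u atTop (𝓝 l))
    (N₀ : ℕ) : ENNReal.ofReal l ≤ ⨆ N, ⨆ _ : N₀ ≤ N, ‖(u N : ℂ)‖ₑ := by
  refine le_of_tendsto ((ENNReal.continuous_ofReal.tendsto l).comp h) ?_
  filter_upwards [eventually_ge_atTop N₀] with N hN
  calc ENNReal.ofReal (u N) ≤ ‖u N‖ₑ := Real.ofReal_le_enorm _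
    _ = ‖(u N : ℂ)‖ₑ := by simp [enorm_eq_nnnorm]
    _ ≤ _ := le_iSup₂ (f := fun N (_ : N₀ ≤ N) => ‖(u N : ℂ)‖ₑ) N hN

section SqrtAverage

variable {X : Type*}

def sqrtAverage {𝕜 : Type*} [DivisionRing 𝕜] (T : X → X) (f g : X → 𝕜) (N : ℕ) (x : X) : 𝕜 :=
  (N : 𝕜)⁻¹ * ∑ n ∈ Finset.Icc 1 N, f (T^[Nat.sqrt n] x) * g (T^[n] x)

lemma ofReal_sqrtAverage (T : X → X) (f g : X → ℝ) (N : ℕ) (x : X) :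
    ((sqrtAverage T f g N x : ℝ) : ℂ) =
      sqrtAverage T (fun y => (f y : ℂ)) (fun y => (g y : ℂ)) N x := by
  simp [sqrtAverage]

end SqrtAverage

section Measure

variable {X : Type*} [MeasurableSpace X] {μ : Measure X}

lemma exists_measurableSet_measure_pos_le_inv_two_pow [IsFiniteMeasure μ] [NeZero μ]
    (hna : ∀ A : Set X, MeasurableSet A → 0 < μ A →
      ∃ B ⊆ A, MeasurableSet B ∧ 0 < μ B ∧ μ B < μ A) (n : ℕ) :
    ∃ A, MeasurableSet A ∧ 0 < μ A ∧ μ A ≤ 2⁻¹ ^ n * μ Set.univ := by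
  induction n with
  | zero => exact ⟨Set.univ, .univ, NeZero.pos _, by simp⟩
  | succ n ih =>
    obtain ⟨A, hA, hApos, hAle⟩ := ih
    obtain ⟨B, hBA, hB, hBpos, hBlt⟩ := hna A hA hApos
    suffices ∃ A', MeasurableSet A' ∧ 0 < μ A' ∧ μ A' ≤ 2⁻¹ * μ A by
      obtain ⟨A', hA', hpos, hle⟩ := this
      refine ⟨A', hA', hpos, hle.trans ?_⟩
      rw [pow_succ', mul_assoc]
      gcongr
    rw [← ENNReal.div_eq_inv_mul]
    by_cases hB2 : μ B ≤ μ A / 2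
    · exact ⟨B, hB, hBpos, hB2⟩
    · have hdiff : μ (A \ B) = μ A - μ B :=
        measure_sdiff hBA hB.nullMeasurableSet (measure_ne_top μ B)
      refine ⟨A \ B, hA.diff hB, hdiff ▸ tsub_pos_of_lt hBlt, ?_⟩
      calc μ (A \ B) = μ A - μ B := hdiff
        _ ≤ μ A - μ A / 2 := tsub_le_tsub_left (not_le.mp hB2).le _
        _ = μ A / 2 := ENNReal.sub_half (measure_ne_top μ A)

lemma frequently_measureReal_nhdsGT_zero [IsFiniteMeasure μ] [NeZero μ]
    (hna : ∀ A : Set X, MeasurableSet A → 0 < μ A →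
      ∃ B ⊆ A, MeasurableSet B ∧ 0 < μ B ∧ μ B < μ A) :
    ∃ᶠ a in 𝓝[>] (0 : ℝ), ∃ A, MeasurableSet A ∧ μ.real A = a := by
  rw [(nhdsGT_basis 0).frequently_iff]
  intro ε hε
  have htend : Tendsto (fun n : ℕ => 2⁻¹ ^ n * μ Set.univ) atTop (𝓝 0) := by
    simpa using ENNReal.Tendsto.mul_const
      (ENNReal.tendsto_pow_atTop_nhds_zero_of_lt_one (by norm_num)) (.inr (measure_ne_top μ _))
  obtain ⟨n, hn⟩ := (htend.eventually (gt_mem_nhds (ENNReal.ofReal_pos.mpr hε))).exists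
  obtain ⟨A, hA, hpos, hle⟩ := exists_measurableSet_measure_pos_le_inv_two_pow hna n
  exact ⟨μ.real A, ⟨ENNReal.toReal_pos hpos.ne' (measure_ne_top μ A),
    ENNReal.toReal_lt_of_lt_ofReal (hle.trans_lt hn)⟩, A, hA, rfl⟩

lemma le_lintegral_rpow_rpow_inv [IsProbabilityMeasure μ] {F : X → ℝ≥0∞} {c : ℝ≥0∞} {p : ℝ}
    (hp : 0 < p) (hF : ∀ᵐ x ∂μ, c ≤ F x) : c ≤ (∫⁻ x, F x ^ p ∂μ) ^ p⁻¹ := by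
  calc c = (∫⁻ _, c ^ p ∂μ) ^ p⁻¹ := by simp [← ENNReal.rpow_mul, hp.ne']
    _ ≤ _ := by
      gcongr ?_ ^ _
      exact lintegral_mono_ae (hF.mono fun x hx => ENNReal.rpow_le_rpow hx hp.le)

lemma eLpNorm_indicator_one {E : Type*} [NormedRing E] [NormOneClass E] {A : Set X}
    (hA : MeasurableSet A) {r : ℝ} (hr : 0 < r) :
    eLpNorm (A.indicator fun _ => (1 : E)) (ENNReal.ofReal r) μ = μ A ^ r⁻¹ := by
  rw [eLpNorm_indicator_const hA (by simpa using hr) ENNReal.ofReal_ne_top]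
  simp [ENNReal.toReal_ofReal hr.le]

lemma sq_measureReal_le_of_maximal_ineq [IsProbabilityMeasure μ] (T : X → X) {p₁ p₂ p C : ℝ}
    (hp₁ : 0 < p₁) (hp₂ : 0 < p₂) (hp : p⁻¹ = p₁⁻¹ + p₂⁻¹) {A : Set X} (hA : MeasurableSet A)
    (hA₀ : 0 < μ.real A)
    (hMax : (∫⁻ x, (⨆ N : ℕ, ⨆ _ : 1 ≤ N, ‖sqrtAverage T (A.indicator fun _ => (1 : ℂ))
          (A.indicator fun _ => 1) N x‖ₑ) ^ p ∂μ) ^ p⁻¹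
        ≤ ENNReal.ofReal C * eLpNorm (A.indicator fun _ => (1 : ℂ)) (ENNReal.ofReal p₁) μ *
          eLpNorm (A.indicator fun _ => (1 : ℂ)) (ENNReal.ofReal p₂) μ)
    (hConv : ∀ᵐ x ∂μ, Tendsto (fun N => sqrtAverage T (A.indicator fun _ => (1 : ℝ))
        (A.indicator fun _ => 1) N x) atTop (𝓝 (μ.real A ^ 2))) :
    μ.real A ^ 2 ≤ C * μ.real A ^ p⁻¹ := by
  have hp₀ : 0 < p := inv_pos.mp (hp ▸ by positivity)
  have hcast : (fun y => ((A.indicator (fun _ => (1 : ℝ)) y : ℝ) : ℂ)) =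
      A.indicator fun _ => (1 : ℂ) := by
    ext y; by_cases hy : y ∈ A <;> simp [hy]
  have hlower := le_lintegral_rpow_rpow_inv hp₀
    (hConv.mono fun x hx => ofReal_le_iSup_enorm_of_tendsto hx 1)
  simp only [ofReal_sqrtAverage, hcast] at hlower
  have hupper : ENNReal.ofReal C * eLpNorm (A.indicator fun _ => (1 : ℂ)) (ENNReal.ofReal p₁) μ *
      eLpNorm (A.indicator fun _ => (1 : ℂ)) (ENNReal.ofReal p₂) μ =
      ENNReal.ofReal (C * μ.real A ^ p⁻¹) := by
    rw [eLpNorm_indicator_one hA hp₁, eLpNorm_indicator_one hA hp₂, mul_assoc,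
      ← ENNReal.rpow_add_of_nonneg _ _ (inv_nonneg.2 hp₁.le) (inv_nonneg.2 hp₂.le), ← hp,
      ENNReal.ofReal_mul' (by positivity), measureReal_def,
      ← ENNReal.ofReal_rpow_of_nonneg ENNReal.toReal_nonneg (inv_nonneg.2 hp₀.le),
      ENNReal.ofReal_toReal (measure_ne_top μ A)]
  exact (ENNReal.ofReal_le_ofReal_iff'.mp ((hlower.trans hMax).trans_eq hupper)).resolve_right
    (not_le.2 (by positivity))

end Measure

theorem stmt16_general {X : Type*} [MeasurableSpace X] (μ : Measure X) [IsProbabilityMeasure μ]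
    -- `μ` is non-atomic
    (hna : ∀ A : Set X, MeasurableSet A → 0 < μ A →
      ∃ B ⊆ A, MeasurableSet B ∧ 0 < μ B ∧ μ B < μ A)
    (T : X → X)
    (p1 p2 p : ℝ) (hp1 : 0 < p1) (hp2 : 0 < p2) (hp : p⁻¹ = p1⁻¹ + p2⁻¹)
    (C : ℝ)
    -- the maximal inequality
    (hMax : ∀ f g : X → ℂ, MemLp f (ENNReal.ofReal p1) μ → MemLp g (ENNReal.ofReal p2) μ →
      (∫⁻ x, (⨆ N : ℕ, ⨆ _ : 1 ≤ N,
          (‖(N : ℂ)⁻¹ * ∑ n ∈ Finset.Icc 1 N, f (T^[Nat.sqrt n] x) * g (T^[n] x)‖₊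
            : ℝ≥0∞)) ^ p ∂μ) ^ p⁻¹
        ≤ ENNReal.ofReal C * eLpNorm f (ENNReal.ofReal p1) μ *
            eLpNorm g (ENNReal.ofReal p2) μ)
    -- pointwise a.e. convergence of the averages of indicators to `μ(A)²`
    (hConv : ∀ A : Set X, MeasurableSet A → ∀ᵐ x ∂μ,
      Tendsto (fun N : ℕ => (N : ℝ)⁻¹ * ∑ n ∈ Finset.Icc 1 N,
          (A.indicator (fun _ => (1 : ℝ)) (T^[Nat.sqrt n] x)) *
            (A.indicator (fun _ => (1 : ℝ)) (T^[n] x)))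
        atTop (nhds ((μ A).toReal ^ 2))) :
    (1 : ℝ) / 2 ≤ p := by
  have hp₀ : 0 < p := inv_pos.mp (hp ▸ by positivity)
  have hsmall : ∃ᶠ a in 𝓝[>] (0 : ℝ), a ^ (2 : ℝ) ≤ C * a ^ p⁻¹ := by
    refine (frequently_measureReal_nhdsGT_zero hna).mp
      (eventually_nhdsWithin_of_forall fun a ha => ?_)
    rintro ⟨A, hA, rfl⟩
    have hf : ∀ r, MemLp (A.indicator fun _ => (1 : ℂ)) r μ := fun r =>
      memLp_indicator_const r hA 1 (.inr (measure_ne_top μ A))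
    exact_mod_cast sq_measureReal_le_of_maximal_ineq T hp1 hp2 hp hA ha
      (hMax _ _ (hf _) (hf _)) (hConv A hA)
  rw [one_div, inv_le_comm₀ two_pos hp₀]
  exact le_of_frequently_rpow_le_mul_rpow hsmall

theorem stmt16 {X : Type*} [MeasurableSpace X] (μ : Measure X) [IsProbabilityMeasure μ]
    -- `μ` is non-atomic
    (hna : ∀ A : Set X, MeasurableSet A → 0 < μ A →
      ∃ B ⊆ A, MeasurableSet B ∧ 0 < μ B ∧ μ B < μ A)
    -- `T` is an invertible bi-measurable measure preserving ergodic map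
    (T : X → X) (hTmp : MeasurePreserving T μ μ)
    (hTinv : ∃ S : X → X, Measurable S ∧ Function.LeftInverse S T ∧ Function.RightInverse S T)
    (hErg : Ergodic T μ)
    (p1 p2 p : ℝ) (hp1 : 0 < p1) (hp2 : 0 < p2) (hp : p⁻¹ = p1⁻¹ + p2⁻¹)
    (C : ℝ) (hC : 0 < C)
    -- the maximal inequality
    (hMax : ∀ f g : X → ℂ, MemLp f (ENNReal.ofReal p1) μ → MemLp g (ENNReal.ofReal p2) μ →
      (∫⁻ x, (⨆ N : ℕ, ⨆ _ : 1 ≤ N,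
          (‖(N : ℂ)⁻¹ * ∑ n ∈ Finset.Icc 1 N, f (T^[Nat.sqrt n] x) * g (T^[n] x)‖₊
            : ℝ≥0∞)) ^ p ∂μ) ^ p⁻¹
        ≤ ENNReal.ofReal C * eLpNorm f (ENNReal.ofReal p1) μ *
            eLpNorm g (ENNReal.ofReal p2) μ)
    -- pointwise a.e. convergence of the averages of indicators to `μ(A)²`
    (hConv : ∀ A : Set X, MeasurableSet A → ∀ᵐ x ∂μ,
      Tendsto (fun N : ℕ => (N : ℝ)⁻¹ * ∑ n ∈ Finset.Icc 1 N,
          (A.indicator (fun _ => (1 : ℝ)) (T^[Nat.sqrt n] x)) *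
            (A.indicator (fun _ => (1 : ℝ)) (T^[n] x)))
        atTop (nhds ((μ A).toReal ^ 2))) :
    (1 : ℝ) / 2 ≤ p :=
  stmt16_general μ hna T p1 p2 p hp1 hp2 hp C hMax hConv
end

section
/- Let $N\ge 1$, $0<\delta\le 1$, and let $f_0,f_1,f_2:\mathbb{Z}\to\mathbb{C}$ be 1-bounded functions supported on $\{-N_0,\dots,N_0\}$ with $N_0\le CN$. If $\delta N \le |\sum_{x\in\mathbb{Z}} f_0(x)\cdot\frac{1}{N}\sum_{n=1}^N 1_{n>N/2} f_1(x-\lfloor\sqrt n\rfloor)f_2(x-n)|$ and $N \ge c\delta^{-2}$ for a suitable absolute constant $c$, then there exist an integer $n\ge 0$ and a natural number $M$ with $c'\sqrt{N}\le M\le \sqrt{N}$ such that $c''\delta M^2 \le |\sum_{x\in\mathbb{Z}} f_0(x)\cdot\frac{1}{M}\sum_{m=1}^M f_1(x-m)f_2(x-n-m^2)|$, where $c',c''>0$ are absolute constants. -/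
open Finset

lemma aux_sum (s : Finset ℤ) (t : Finset ℕ) (f0 : ℤ → ℂ) (g : ℤ → ℕ → ℂ) (c : ℂ)
    (h0 : ∀ x ∉ s, f0 x = 0) :
    ∑' x : ℤ, f0 x * (c * ∑ m ∈ t, g x m) = c * ∑ m ∈ t, ∑ x ∈ s, f0 x * g x m := by
  rw [tsum_eq_sum (s := s) (fun x hx => by rw [h0 x hx, zero_mul])]
  simp only [Finset.mul_sum]
  rw [Finset.sum_comm]
  exact Finset.sum_congr rfl fun m _ => Finset.sum_congr rfl fun x _ => by ring

lemma sqrt_mul_le (n : ℕ) : Nat.sqrt n * Nat.sqrt n ≤ n := by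
  have := Nat.sqrt_le' n; rwa [pow_two] at this

lemma lt_sqrt_bound (n : ℕ) : n < Nat.sqrt n * Nat.sqrt n + 2 * Nat.sqrt n + 1 := by
  have := Nat.lt_succ_sqrt n
  have e : (Nat.sqrt n).succ * (Nat.sqrt n).succ
      = Nat.sqrt n * Nat.sqrt n + 2 * Nat.sqrt n + 1 := by
    rw [Nat.succ_eq_add_one]; ring
  omega

lemma aux_reindex (N : ℕ) (Φ : ℕ → ℂ) (Ψ : ℕ → ℕ → ℂ)
    (hcompat : ∀ r m, r ≤ 2*m → Ψ r m = Φ (m*m+r)) :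
    ∑ n ∈ (Finset.Icc 1 N).filter (fun n => N < 2*n), Φ n
      = ∑ r ∈ Finset.Icc 0 (2*Nat.sqrt N),
          ∑ m ∈ (Finset.Icc 0 (Nat.sqrt N)).filter
            (fun m => r ≤ 2*m ∧ N < 2*(m*m+r) ∧ m*m+r ≤ N), Ψ r m := by
  rw [Finset.sum_sigma']
  refine Finset.sum_nbij' (i := fun n => ⟨n - Nat.sqrt n * Nat.sqrt n, Nat.sqrt n⟩)
    (j := fun p => p.2*p.2+p.1) ?_ ?_ ?_ ?_ ?_
  · intro n hn
    simp only [Finset.mem_filter, Finset.mem_Icc] at hn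
    have h1 := sqrt_mul_le n
    have h2 := lt_sqrt_bound n
    have h3 : Nat.sqrt n ≤ Nat.sqrt N := Nat.sqrt_le_sqrt hn.1.2
    simp only [Finset.mem_sigma, Finset.mem_filter, Finset.mem_Icc]
    omega
  · intro p hp
    simp only [Finset.mem_sigma, Finset.mem_filter, Finset.mem_Icc] at hp ⊢
    omega
  · intro n hn
    simp only [Finset.mem_filter, Finset.mem_Icc] at hn
    have h1 := sqrt_mul_le n
    dsimp only
    omega
  · intro p hp
    simp only [Finset.mem_sigma, Finset.mem_filter, Finset.mem_Icc] at hp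
    obtain ⟨r, m⟩ := p
    dsimp only at hp ⊢
    have hsq : Nat.sqrt (m * m + r) = m := Nat.sqrt_add_eq m (by omega)
    rw [hsq]
    have : m * m + r - m * m = r := by omega
    rw [this]
  · intro n hn
    simp only [Finset.mem_filter, Finset.mem_Icc] at hn
    have h1 := sqrt_mul_le n
    dsimp only
    rw [hcompat _ _ (by have := lt_sqrt_bound n; omega)]
    congr 1
    omega

lemma aux_main (N : ℕ) (δ SR : ℝ) (G2 : ℕ → ℕ → ℂ)
    (hδ0 : 0 < δ) (hN1 : 1 ≤ N)
    (hSR2 : SR * SR = (N:ℝ)) (hSR16 : (16:ℝ) ≤ SR)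
    (hU : δ * N * N ≤ ‖∑ r ∈ Finset.Icc 0 (2*Nat.sqrt N),
      ∑ m ∈ (Finset.Icc 0 (Nat.sqrt N)).filter
        (fun m => r ≤ 2*m ∧ N < 2*(m*m+r) ∧ m*m+r ≤ N), G2 r m‖) :
    ∃ (r M : ℕ), 1/4 * SR ≤ (M:ℝ) ∧ (M:ℝ) ≤ SR ∧ 0 < M ∧
      1/6 * δ * (M:ℝ)^2 * M ≤ ‖∑ m ∈ Finset.Icc 1 M, G2 r m‖ := by
  classical
  have hNpos : (0:ℝ) < N := by exact_mod_cast hN1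
  have hSRpos : (0:ℝ) < SR := by linarith
  have hRcast : ((2*Nat.sqrt N : ℕ):ℝ) ≤ 2 * SR := by
    have h1 : ((Nat.sqrt N : ℝ)) ≤ SR := by
      nlinarith [sqrt_mul_le N, (by exact_mod_cast sqrt_mul_le N :
        ((Nat.sqrt N:ℝ)) * (Nat.sqrt N:ℝ) ≤ (N:ℝ)), Nat.cast_nonneg (α := ℝ) (Nat.sqrt N)]
    push_cast
    linarith
  set R := 2 * Nat.sqrt N with hRdef
  have hpig : ∃ r ∈ Finset.Icc 0 R, δ * N * N / (R+1) ≤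
      ‖∑ m ∈ (Finset.Icc 0 (Nat.sqrt N)).filter
        (fun m => r ≤ 2*m ∧ N < 2*(m*m+r) ∧ m*m+r ≤ N), G2 r m‖ := by
    apply Finset.exists_le_of_sum_le ⟨0, Finset.mem_Icc.mpr ⟨le_refl 0, Nat.zero_le R⟩⟩
    have hc : ∑ _r ∈ Finset.Icc 0 R, (δ * N * N / (R+1)) = δ * N * N := by
      rw [Finset.sum_const, Nat.card_Icc, nsmul_eq_mul]
      have h1 : ((R+1-0 : ℕ):ℝ) = (R:ℝ)+1 := by push_cast; ring
      rw [h1]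
      field_simp
    rw [hc]
    exact le_trans hU (norm_sum_le _ _)
  obtain ⟨r, hrmem, hYr⟩ := hpig
  have hrR : r ≤ R := (Finset.mem_Icc.mp hrmem).2
  have hKpos : (0:ℝ) < δ * N * N / (R+1) := by positivity
  set A : Finset ℕ := (Finset.Icc 0 (Nat.sqrt N)).filter
      (fun m => r ≤ 2*m ∧ N < 2*(m*m+r) ∧ m*m+r ≤ N) with hAdef
  have hAne : A.Nonempty := by
    rcases Finset.eq_empty_or_nonempty A with h | h
    · exfalso; rw [h] at hYr; simp at hYr; linarith
    · exact h
  obtain ⟨m0, hm0mem⟩ := hAne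
  have hm0 : m0 ≤ Nat.sqrt N ∧ r ≤ 2*m0 ∧ N < 2*(m0*m0+r) ∧ m0*m0+r ≤ N := by
    have := hm0mem
    rw [hAdef, Finset.mem_filter, Finset.mem_Icc] at this
    exact ⟨this.1.2, this.2⟩
  have hLex : ∃ m, r ≤ 2*m ∧ N < 2*(m*m+r) := ⟨m0, hm0.2.1, hm0.2.2.1⟩
  have hrN : r ≤ N := by omega
  obtain ⟨a, hLa, hamin, ha1⟩ : ∃ a : ℕ, (r ≤ 2*a ∧ N < 2*(a*a+r)) ∧
      (∀ m, r ≤ 2*m ∧ N < 2*(m*m+r) → a ≤ m) ∧ 1 ≤ a := by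
    refine ⟨Nat.find hLex, Nat.find_spec hLex, fun m hm => Nat.find_min' hLex hm, ?_⟩
    rw [Nat.one_le_iff_ne_zero]
    intro h
    have h0 := (Nat.find_eq_zero hLex).mp h
    omega
  obtain ⟨b, hble⟩ : ∃ b : ℕ, ∀ m, m ≤ b ↔ m * m ≤ N - r :=
    ⟨Nat.sqrt (N - r), fun m => Nat.le_sqrt⟩
  have hbb : b * b ≤ N - r := (hble b).mp (le_refl b)
  have hAeq : A = Finset.Icc a b := by
    ext m
    rw [hAdef, Finset.mem_filter, Finset.mem_Icc, Finset.mem_Icc]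
    constructor
    · rintro ⟨⟨-, hmN⟩, h1, h2, h3⟩
      exact ⟨hamin m ⟨h1, h2⟩, (hble m).mpr (by omega)⟩
    · rintro ⟨ham, hmb⟩
      have hmm : m * m ≤ N - r := (hble m).mp hmb
      have haa : a * a ≤ m * m := Nat.mul_le_mul ham ham
      refine ⟨⟨Nat.zero_le _, ?_⟩, by omega, by omega, by omega⟩
      have := sqrt_mul_le N
      exact Nat.le_sqrt.mpr (by omega)
  have hab : a ≤ b := by
    have hmem := hAeq ▸ hm0mem
    have := Finset.mem_Icc.mp hmem
    omega
  have hYW : ∑ m ∈ A, G2 r m = (∑ m ∈ Finset.Icc 1 b, G2 r m)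
      - (∑ m ∈ Finset.Icc 1 (a-1), G2 r m) := by
    have e1 : Finset.Icc a b = Finset.Ioc (a-1) b := by
      ext m; simp only [Finset.mem_Icc, Finset.mem_Ioc]; omega
    have e2 : ∀ M : ℕ, Finset.Icc 1 M = Finset.Ioc 0 M := fun M => by
      ext m; simp only [Finset.mem_Icc, Finset.mem_Ioc]; omega
    have e3 := Finset.sum_Ioc_consecutive (fun m => G2 r m)
      (Nat.zero_le (a-1)) (show a-1 ≤ b by omega)
    rw [hAeq, e1, e2, e2]
    linear_combination e3
  obtain ⟨M, hMab, hMb, hWM⟩ : ∃ M, a - 1 ≤ M ∧ M ≤ b ∧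
      ‖∑ m ∈ A, G2 r m‖ ≤ 2 * ‖∑ m ∈ Finset.Icc 1 M, G2 r m‖ := by
    have hle := hYW ▸ norm_sub_le (∑ m ∈ Finset.Icc 1 b, G2 r m)
      (∑ m ∈ Finset.Icc 1 (a-1), G2 r m)
    by_cases hc : ‖∑ m ∈ Finset.Icc 1 (a-1), G2 r m‖ ≤ ‖∑ m ∈ Finset.Icc 1 b, G2 r m‖
    · exact ⟨b, by omega, le_refl _, by linarith⟩
    · exact ⟨a-1, le_refl _, by omega, by linarith⟩
  -- real bounds
  have hMSR : (M:ℝ) ≤ SR := by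
    have h1 : M * M ≤ N := by
      have := Nat.mul_le_mul hMb hMb
      omega
    have h2 : ((M:ℝ)) * (M:ℝ) ≤ (N:ℝ) := by exact_mod_cast h1
    nlinarith [Nat.cast_nonneg (α := ℝ) M]
  have hrSR : (r:ℝ) ≤ 2 * SR := by
    have : (r:ℝ) ≤ (R:ℝ) := by exact_mod_cast hrR
    linarith
  have haSR : SR / 2 ≤ (a:ℝ) := by
    have h2 : (N:ℝ) < 2*((a:ℝ)*(a:ℝ) + (r:ℝ)) := by exact_mod_cast hLa.2
    nlinarith [Nat.cast_nonneg (α := ℝ) a]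
  have hMlb : SR / 4 ≤ (M:ℝ) := by
    have hc : ((a - 1 : ℕ):ℝ) ≤ (M:ℝ) := by exact_mod_cast hMab
    rw [Nat.cast_sub ha1] at hc
    push_cast at hc
    linarith
  have hMpos : 0 < M := by
    rcases Nat.eq_zero_or_pos M with h | h
    · exfalso; rw [h] at hMlb; norm_num at hMlb; linarith
    · exact h
  have hMposR : (0:ℝ) < M := by exact_mod_cast hMpos
  refine ⟨r, M, by linarith, hMSR, hMpos, ?_⟩
  -- numeric endgame
  have hKW : δ * N * N / (R+1) ≤ 2 * ‖∑ m ∈ Finset.Icc 1 M, G2 r m‖ :=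
    le_trans hYr hWM
  have hK2 : δ * N * N ≤ ((R:ℝ)+1) * (2 * ‖∑ m ∈ Finset.Icc 1 M, G2 r m‖) := by
    rw [div_le_iff₀ (by positivity)] at hKW
    linarith
  have hR3 : (R:ℝ) + 1 ≤ 3 * SR := by linarith
  have hWnn : (0:ℝ) ≤ ‖∑ m ∈ Finset.Icc 1 M, G2 r m‖ := norm_nonneg _
  have hK3 : δ * (SR*SR) * (SR*SR) ≤ 3 * SR * (2 * ‖∑ m ∈ Finset.Icc 1 M, G2 r m‖) := by
    rw [hSR2]
    calc δ * (N:ℝ) * N ≤ ((R:ℝ)+1) * (2*‖∑ m ∈ Finset.Icc 1 M, G2 r m‖) := hK2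
    _ ≤ 3 * SR * (2*‖∑ m ∈ Finset.Icc 1 M, G2 r m‖) :=
      mul_le_mul_of_nonneg_right hR3 (by positivity)
  have hK4 : δ * (SR * SR * SR) ≤ 6 * ‖∑ m ∈ Finset.Icc 1 M, G2 r m‖ := by
    have hne : SR ≠ 0 := ne_of_gt hSRpos
    have h5 : δ * (SR * SR * SR) * SR ≤ 6 * ‖∑ m ∈ Finset.Icc 1 M, G2 r m‖ * SR := by
      linear_combination hK3
    exact le_of_mul_le_mul_right h5 hSRpos
  have hM3 : δ * ((M:ℝ)*(M:ℝ)*(M:ℝ)) ≤ δ * (SR*SR*SR) := by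
    refine mul_le_mul_of_nonneg_left ?_ hδ0.le
    have hM0 : (0:ℝ) ≤ (M:ℝ) := Nat.cast_nonneg M
    have hMM : (M:ℝ)*(M:ℝ) ≤ SR*SR := mul_le_mul hMSR hMSR hM0 hSRpos.le
    exact mul_le_mul hMM hMSR hM0 (mul_nonneg hSRpos.le hSRpos.le)
  have e : (1/6:ℝ) * δ * (M:ℝ)^2 * M = δ * ((M:ℝ)*(M:ℝ)*(M:ℝ)) / 6 := by ring
  rw [e]
  linarith only [hM3, hK4]

theorem stmt17 :
    ∀ Csupp : ℝ, 0 < Csupp →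
    ∃ c c' c'' : ℝ, 0 < c ∧ 0 < c' ∧ 0 < c'' ∧
      ∀ (N N0 : ℕ) (δ : ℝ) (f0 f1 f2 : ℤ → ℂ),
        1 ≤ N → 0 < δ → δ ≤ 1 →
        (N0 : ℝ) ≤ Csupp * N →
        (∀ x, ‖f0 x‖ ≤ 1) → (∀ x, ‖f1 x‖ ≤ 1) → (∀ x, ‖f2 x‖ ≤ 1) →
        (∀ x : ℤ, f0 x ≠ 0 → |x| ≤ (N0 : ℤ)) →
        (∀ x : ℤ, f1 x ≠ 0 → |x| ≤ (N0 : ℤ)) →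
        (∀ x : ℤ, f2 x ≠ 0 → |x| ≤ (N0 : ℤ)) →
        δ * N ≤ ‖∑' x : ℤ, f0 x * ((N : ℂ)⁻¹ * ∑ n ∈ Finset.Icc 1 N,
          (if N < 2 * n then f1 (x - (Nat.sqrt n : ℤ)) * f2 (x - (n : ℤ)) else 0))‖ →
        c * δ ^ (-2 : ℤ) ≤ (N : ℝ) →
        ∃ (n : ℕ) (M : ℕ),
          c' * Real.sqrt N ≤ (M : ℝ) ∧ (M : ℝ) ≤ Real.sqrt N ∧
          c'' * δ * (M : ℝ) ^ 2 ≤ ‖∑' x : ℤ, f0 x * ((M : ℂ)⁻¹ * ∑ m ∈ Finset.Icc 1 M,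
            f1 (x - (m : ℤ)) * f2 (x - (n : ℤ) - (m : ℤ) ^ 2))‖ := by
  intro Csupp hCsupp
  refine ⟨256, 1/4, 1/6, by norm_num, by norm_num, by norm_num, ?_⟩
  intro N N0 δ f0 f1 f2 hN1 hδ0 hδ1 hN0C hbd0 hbd1 hbd2 hsp0 hsp1 hsp2 hmain hNbig
  classical
  have hNpos : (0:ℝ) < N := by exact_mod_cast hN1
  have hδinv : (1:ℝ) ≤ δ ^ (-2:ℤ) := by
    rw [zpow_neg]
    rw [one_le_inv_iff₀]
    constructor
    · positivity
    · have h : δ ^ (2:ℤ) = δ ^ (2:ℕ) := by norm_cast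
      rw [h]
      nlinarith
  have h256 : (256:ℝ) ≤ N := by nlinarith
  have hSR2 : Real.sqrt N * Real.sqrt N = (N:ℝ) := Real.mul_self_sqrt hNpos.le
  have hSR16 : (16:ℝ) ≤ Real.sqrt N := by
    rw [show (16:ℝ) = Real.sqrt 256 by
      rw [show (256:ℝ) = 16^2 by norm_num, Real.sqrt_sq (by norm_num)]]
    exact Real.sqrt_le_sqrt h256
  have hSRpos : (0:ℝ) < Real.sqrt N := by linarith
  -- support set
  have hf0z : ∀ x : ℤ, x ∉ Finset.Icc (-(N0:ℤ)) (N0:ℤ) → f0 x = 0 := by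
    intro x hx
    by_contra h
    exact hx (Finset.mem_Icc.mpr (abs_le.mp (hsp0 x h)))
  -- hypothesis transformation
  rw [aux_sum (Finset.Icc (-(N0:ℤ)) (N0:ℤ)) (Finset.Icc 1 N) f0
    (fun x n => if N < 2 * n then f1 (x - (Nat.sqrt n : ℤ)) * f2 (x - (n : ℤ)) else 0)
    ((N:ℂ)⁻¹) hf0z] at hmain
  have ht2 : ∀ n : ℕ, (∑ x ∈ Finset.Icc (-(N0:ℤ)) (N0:ℤ),
        f0 x * (if N < 2 * n then f1 (x - (Nat.sqrt n : ℤ)) * f2 (x - (n : ℤ)) else 0))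
      = (if N < 2 * n then ∑ x ∈ Finset.Icc (-(N0:ℤ)) (N0:ℤ),
          f0 x * (f1 (x - (Nat.sqrt n : ℤ)) * f2 (x - (n : ℤ))) else 0) := by
    intro n
    split <;> simp
  simp only [ht2] at hmain
  rw [← Finset.sum_filter] at hmain
  have hcompat : ∀ r m : ℕ, r ≤ 2*m →
      (∑ x ∈ Finset.Icc (-(N0:ℤ)) (N0:ℤ),
        f0 x * (f1 (x - (m:ℤ)) * f2 (x - (r:ℤ) - (m:ℤ)^2)))
      = (fun n : ℕ => ∑ x ∈ Finset.Icc (-(N0:ℤ)) (N0:ℤ),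
          f0 x * (f1 (x - (Nat.sqrt n : ℤ)) * f2 (x - (n : ℤ)))) (m*m+r) := by
    intro r m hrm
    dsimp only
    have hsq : Nat.sqrt (m*m+r) = m := Nat.sqrt_add_eq m (by omega)
    rw [hsq]
    refine Finset.sum_congr rfl fun x _ => ?_
    have harg : x - ((m*m+r : ℕ):ℤ) = x - (r:ℤ) - (m:ℤ)^2 := by push_cast; ring
    rw [harg]
  rw [aux_reindex N
    (fun n : ℕ => ∑ x ∈ Finset.Icc (-(N0:ℤ)) (N0:ℤ),
      f0 x * (f1 (x - (Nat.sqrt n : ℤ)) * f2 (x - (n : ℤ))))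
    (fun r m => ∑ x ∈ Finset.Icc (-(N0:ℤ)) (N0:ℤ),
      f0 x * (f1 (x - (m:ℤ)) * f2 (x - (r:ℤ) - (m:ℤ)^2)))
    hcompat] at hmain
  rw [norm_mul, norm_inv, Complex.norm_natCast] at hmain
  have hU : δ * N * N ≤ ‖∑ r ∈ Finset.Icc 0 (2*Nat.sqrt N),
      ∑ m ∈ (Finset.Icc 0 (Nat.sqrt N)).filter
        (fun m => r ≤ 2*m ∧ N < 2*(m*m+r) ∧ m*m+r ≤ N),
      (∑ x ∈ Finset.Icc (-(N0:ℤ)) (N0:ℤ),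
        f0 x * (f1 (x - (m:ℤ)) * f2 (x - (r:ℤ) - (m:ℤ)^2)))‖ := by
    have h := mul_le_mul_of_nonneg_left hmain hNpos.le
    have hNne : (N:ℝ) ≠ 0 := ne_of_gt hNpos
    calc δ * N * N = N * (δ * N) := by ring
    _ ≤ N * ((N:ℝ)⁻¹ * _) := h
    _ = _ := by rw [← mul_assoc, mul_inv_cancel₀ hNne, one_mul]
  obtain ⟨r, M, hM1, hM2, hMpos, hM3⟩ := aux_main N δ (Real.sqrt N)
    (fun r m => ∑ x ∈ Finset.Icc (-(N0:ℤ)) (N0:ℤ),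
      f0 x * (f1 (x - (m:ℤ)) * f2 (x - (r:ℤ) - (m:ℤ)^2)))
    hδ0 hN1 hSR2 hSR16 hU
  have hMposR : (0:ℝ) < M := by exact_mod_cast hMpos
  refine ⟨r, M, hM1, hM2, ?_⟩
  rw [aux_sum (Finset.Icc (-(N0:ℤ)) (N0:ℤ)) (Finset.Icc 1 M) f0
    (fun x m => f1 (x - (m:ℤ)) * f2 (x - (r:ℤ) - (m:ℤ)^2)) ((M:ℂ)⁻¹) hf0z]
  rw [norm_mul, norm_inv, Complex.norm_natCast, inv_mul_eq_div, le_div_iff₀ hMposR]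
  calc 1/6 * δ * (M:ℝ)^2 * M ≤ _ := hM3
  _ = _ := rfl
end
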